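/- arXiv:cs/0403044 — 4 statements merged into one kernel-verified Lean document; each statement's English description precedes it below -/
import Mathlib

section
/- If t is a deterministic dominator of s (s ≺_D t) and s ≠ t, then in the induced fully probabilistic system under any simple adversary, every path starting from s reaches t with probability 1, i.e., the probability measure of paths from s that eventually visit t equals 1. -/
open scoped ENNReal Classical

/-- Deterministic dominator relation (smallest relation with `s ≺_D s`, and
`s ≺_D t` whenever every outgoing distribution of `s` has singleton support
`{x}` with `x ≺_D t`). -/
inductive Dom {S A : Type*} (steps : S → Set (A × PMF S)) : S → S → Prop
  | refl (s : S) : Dom steps s s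
  | step (s t : S)
      (hsing : ∀ p ∈ steps s, ∃ x : S, p.2.support = {x})
      (h : ∀ p ∈ steps s, ∀ x : S, p.2.support = {x} → Dom steps x t) :
      Dom steps s t

/-- Probability, in the Markov chain with transition kernel `P`, of reaching the
target set `F` from `s` within `n` steps. -/

noncomputable def reachN {S : Type*} (P : S → PMF S) (F : Set S) : ℕ → S → ℝ≥0∞
  | 0, s => if s ∈ F then 1 else 0
  | n + 1, s => if s ∈ F then 1 else ∑' s', P s s' * reachN P F n s'

/-- Probability of eventually reaching `F` from `s` in the Markov chain `P`;
this is the cylinder-construction measure of the set of infinite paths from `s`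
that visit `F`. -/
noncomputable def probReach {S : Type*} (P : S → PMF S) (F : Set S) (s : S) : ℝ≥0∞ :=
  ⨆ n, reachN P F n s

lemma reachN_le_one {S : Type*} (P : S → PMF S) (F : Set S) :
    ∀ n s, reachN P F n s ≤ 1 := by
  intro n
  induction n with
  | zero => intro s; simp [reachN]; split <;> simp
  | succ n ih =>
    intro s
    simp only [reachN]
    split
    · exact le_rfl
    · calc ∑' s', P s s' * reachN P F n s' ≤ ∑' s', P s s' * 1 := by
            exact ENNReal.tsum_le_tsum fun s' => mul_le_mul_right (ih s') _
        _ = 1 := by simpa using (P s).tsum_coe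

lemma probReach_le_one {S : Type*} (P : S → PMF S) (F : Set S) (s : S) :
    probReach P F s ≤ 1 :=
  iSup_le fun n => reachN_le_one P F n s

theorem dom_reach_one' {S A : Type*}
    (steps : S → Set (A × PMF S))
    (f : S → A × PMF S) (hf : ∀ s, f s ∈ steps s)
    (s t : S) (hst : Dom steps s t) :
    probReach (fun s => (f s).2) {t} s = 1 := by
  set P : S → PMF S := fun s => (f s).2 with hP
  induction hst with
  | refl s =>
    refine le_antisymm (probReach_le_one _ _ _) ?_
    have : reachN P {s} 0 s = 1 := by simp [reachN]
    calc (1 : ℝ≥0∞) = reachN P {s} 0 s := this.symm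
      _ ≤ probReach P {s} s := le_iSup (fun n => reachN P {s} n s) 0
  | step s t hsing h ih =>
    obtain ⟨x, hx⟩ := hsing (f s) (hf s)
    have hxt : probReach P {t} x = 1 := ih (f s) (hf s) x hx
    have hPx : P s x = 1 := by
      have := (P s).tsum_coe
      have hz : ∀ s' ≠ x, P s s' = 0 := by
        intro s' hs'
        have : s' ∉ (P s).support := by rw [hx]; simpa using hs'
        simpa [PMF.mem_support_iff] using this
      rwa [tsum_eq_single x (fun b hb => hz b hb)] at this
    have key : ∀ n, reachN P {t} n x ≤ reachN P {t} (n+1) s := by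
      intro n
      simp only [reachN]
      split
      · exact reachN_le_one _ _ _ _
      · rw [tsum_eq_single x]
        · rw [hPx, one_mul]
        · intro b hb
          have : b ∉ (P s).support := by rw [hx]; simpa using hb
          rw [PMF.mem_support_iff, not_not] at this
          simp [this]
    refine le_antisymm (probReach_le_one _ _ _) ?_
    calc (1 : ℝ≥0∞) = probReach P {t} x := hxt.symm
      _ = ⨆ n, reachN P {t} n x := rfl
      _ ≤ ⨆ n, reachN P {t} (n+1) s := iSup_mono key
      _ ≤ probReach P {t} s := iSup_le fun n => le_iSup (fun n => reachN P {t} n s) (n+1)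

/-- if `t` is a deterministic dominator of `s` and `s ≠ t`, then in
the fully probabilistic system induced by any simple adversary `f` (with
`f s ∈ steps s` for all `s`), the probability of the set of paths from `s` that
eventually visit `t` equals 1. -/
theorem dom_reach_one {S A : Type*} [Fintype S]
    (steps : S → Set (A × PMF S))
    (f : S → A × PMF S) (hf : ∀ s, f s ∈ steps s)
    (s t : S) (hst : Dom steps s t) (hne : s ≠ t) :
    probReach (fun s => (f s).2) {t} s = 1 := dom_reach_one' steps f hf s t hst
end

section
/- If s ≺_D t with s ≠ t, then in the fully probabilistic system induced by any simple adversary, every transition taken along any path from s before reaching t has probability 1 (all distributions along the segment from s to t are Dirac distributions). -/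
open scoped ENNReal

lemma pmf_support_singleton_eq_pure {S : Type*} (π : PMF S) (x : S)
    (h : π.support = {x}) : π = PMF.pure x := by
  ext b
  by_cases hb : b = x
  · subst hb
    have hx : π b = 1 := by
      rw [(PMF.apply_eq_one_iff _ _)]; exact h
    simp [hx]
  · have : b ∉ π.support := by rw [h]; simpa using hb
    simp [(PMF.apply_eq_zero_iff _ _).mpr this, PMF.pure_apply, hb]

/-- if `s ≺_D t` with `s ≠ t`, then in the fully probabilistic
system induced by any simple adversary `f`, every transition taken along any
path from `s` before reaching `t` has probability 1, i.e. all the distributions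
along the segment from `s` to `t` are Dirac.  Here a path from `s` is a
sequence `p 0 = s, p 1, …` with positive transition probability between
consecutive states, and "before reaching `t`" means `p i ≠ t` for all `i < k`. -/
theorem dom_path_dirac {S A : Type*} [Fintype S]
    (steps : S → Set (A × PMF S))
    (f : S → A × PMF S) (hf : ∀ s, f s ∈ steps s)
    (s t : S) (hst : Dom steps s t) (hne : s ≠ t)
    (p : ℕ → S) (k : ℕ) (h0 : p 0 = s)
    (hpos : ∀ i < k, 0 < (f (p i)).2 (p (i + 1)))
    (hbefore : ∀ i < k, p i ≠ t) :
    ∀ i < k, (f (p i)).2 = PMF.pure (p (i + 1)) := by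
  -- main invariant: Dom steps (p i) t for all i ≤ k, proved together with the goal
  have key : ∀ i ≤ k, Dom steps (p i) t ∧
      (i < k → (f (p i)).2 = PMF.pure (p (i + 1))) := by
    intro i
    induction i with
    | zero =>
      intro _
      have hd : Dom steps (p 0) t := by rw [h0]; exact hst
      refine ⟨hd, fun hk => ?_⟩
      cases hd with
      | refl => exact absurd (hbefore 0 hk) (by simp)
      | step _ _ hsing h =>
        obtain ⟨x, hx⟩ := hsing _ (hf (p 0))
        have hmem : p 1 ∈ ((f (p 0)).2).support :=
          (PMF.apply_pos_iff _ _).mp (hpos 0 hk)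
        rw [hx] at hmem
        rw [Set.mem_singleton_iff] at hmem
        subst hmem
        exact pmf_support_singleton_eq_pure _ _ hx
    | succ n ih =>
      intro hnk
      have hn : n ≤ k := Nat.le_of_succ_le hnk
      have hnlt : n < k := Nat.lt_of_succ_le hnk
      obtain ⟨hd, _⟩ := ih hn
      -- from Dom (p n) t and p n ≠ t, get Dom (p (n+1)) t
      have hd' : Dom steps (p (n + 1)) t := by
        cases hd with
        | refl => exact absurd (hbefore n hnlt) (by simp)
        | step _ _ hsing h =>
          obtain ⟨x, hx⟩ := hsing _ (hf (p n))
          have hmem : p (n + 1) ∈ ((f (p n)).2).support :=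
            (PMF.apply_pos_iff _ _).mp (hpos n hnlt)
          rw [hx] at hmem
          rw [Set.mem_singleton_iff] at hmem
          subst hmem
          exact h _ (hf (p n)) _ hx
      refine ⟨hd', fun hk => ?_⟩
      cases hd' with
      | refl => exact absurd (hbefore (n + 1) hk) (by simp)
      | step _ _ hsing h =>
        obtain ⟨x, hx⟩ := hsing _ (hf (p (n + 1)))
        have hmem : p (n + 2) ∈ ((f (p (n + 1))).2).support :=
          (PMF.apply_pos_iff _ _).mp (hpos (n + 1) hk)
        rw [hx] at hmem
        rw [Set.mem_singleton_iff] at hmem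
        subst hmem
        exact pmf_support_singleton_eq_pure _ _ hx
  intro i hik
  exact (key i (le_of_lt hik)).2 hik
end

section
/- Let PTA₁ = PTA₁¹ ∥ ... ∥ PTAₙ¹ and PTA₂ = PTA₁² ∥ ... ∥ PTAₙ² be compositions of n probabilistic timed automata, with D ⊆ {1,...,n} the difference set (indices where the components differ as tuples) and D_i the specific difference set of component i (the common states of PTA_i¹ and PTA_i² that are points of disagreement; D_i = ∅ for i ∉ D). If a composed state (l₁,...,lₙ) common to both composed automata is a point of disagreement between PTA₁ and PTA₂, then there exists an index i with l_i ∈ D_i. -/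
open scoped ENNReal Classical

universe u

/-- A probabilistic timed automaton with locations `L`, clocks `C`, labels `A`;
zones are modeled extensionally as sets of integer clock valuations. -/
structure PTA (L : Type u) (C A : Type) : Type u where
  init : L
  inv : L → Set (C → ℕ)
  urgent : Set A
  edges : Set (L × Set (C → ℕ) × A × PMF (Set C × L))

/-- Product of a `Fin n`-indexed family of probability distributions. -/
noncomputable def pmfPi : ∀ {n : ℕ} {β : Fin n → Type u},
    ((i : Fin n) → PMF (β i)) → PMF ((i : Fin n) → β i)
  | 0, _, _ => PMF.pure (fun i => i.elim0)
  | _ + 1, _, p =>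
      (p 0).bind fun x => (pmfPi fun i => p i.succ).map fun f => Fin.cons x f

/-- The `n`-fold synchronized parallel composition
`PTA₁ ∥ PTA₂ ∥ … ∥ PTAₙ` of probabilistic timed automata sharing the clock set
`C`, where component `i` has alphabet `alpha i`.  Components synchronize on
shared action labels: for a label `a`, every component whose alphabet contains
`a` must take an `a`-labeled edge, while the other components stay put (guard
`univ`, Dirac distribution resetting nothing).  The composed invariant is the
conjunction (intersection) of the component invariants, composed guards are
intersections, composed clock-reset sets are unions, and the composed
distribution is the product of the component distributions. -/
noncomputable def compose {n : ℕ} {L : Fin n → Type} {C A : Type}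
    (alpha : Fin n → Set A) (P : ∀ i, PTA (L i) C A) :
    PTA (∀ i, L i) C A where
  init := fun i => (P i).init
  inv := fun l => ⋂ i, (P i).inv (l i)
  urgent := ⋃ i, (P i).urgent
  edges :=
    { e | ∃ (a : A) (g : Fin n → Set (C → ℕ)) (p : ∀ i, PMF (Set C × L i)),
        (∃ i, a ∈ alpha i) ∧
        (∀ i, a ∈ alpha i → (e.1 i, g i, a, p i) ∈ (P i).edges) ∧
        (∀ i, a ∉ alpha i → g i = Set.univ ∧ p i = PMF.pure (∅, e.1 i)) ∧
        e.2.1 = ⋂ i, g i ∧ e.2.2.1 = a ∧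
        e.2.2.2 = (pmfPi p).map fun f => (⋃ i, (f i).1, fun i => (f i).2) }

/-- The set of outgoing transitions of a PTA at location `s`. -/
def outEdges {L : Type u} {C A : Type} (P : PTA L C A) (s : L) :
    Set (L × Set (C → ℕ) × A × PMF (Set C × L)) :=
  { e ∈ P.edges | e.1 = s }

/-- A common location `s` is a point of disagreement between two PTAs if they
differ at `s` in the invariant or in the set of outgoing transitions (guard,
label, or distribution). -/
def DisagreeAt {L : Type u} {C A : Type} (P₁ P₂ : PTA L C A) (s : L) : Prop :=
  P₁.inv s ≠ P₂.inv s ∨ outEdges P₁ s ≠ outEdges P₂ s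

lemma composed_out_subset {n : ℕ} {L : Fin n → Type} {C A : Type}
    (alpha : Fin n → Set A) (P₁ P₂ : ∀ i, PTA (L i) C A)
    (l : ∀ i, L i)
    (hc : ∀ i, outEdges (P₁ i) (l i) = outEdges (P₂ i) (l i)) :
    outEdges (compose alpha P₁) l ⊆ outEdges (compose alpha P₂) l := by
  rintro e ⟨⟨a, g, p, hex, h1, h2, h3⟩, hl⟩
  refine ⟨⟨a, g, p, hex, fun i hi => ?_, h2, h3⟩, hl⟩
  have hmem : (e.1 i, g i, a, p i) ∈ outEdges (P₁ i) (l i) :=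
    ⟨h1 i hi, by rw [hl]⟩
  rw [hc i] at hmem
  exact hmem.1

/-- Lemma on composed PTAs: let
`PTA₁ = PTA₁¹ ∥ … ∥ PTAₙ¹` and `PTA₂ = PTA₁² ∥ … ∥ PTAₙ²` be `n`-fold
compositions, and for each `i` let `D_i` be the specific difference set of
component `i` (the common states of `PTA_i¹` and `PTA_i²` that are points of
disagreement; it is empty whenever the components coincide).  If a composed
state `(l₁, …, lₙ)` common to both composed automata is a point of
disagreement between the two compositions, then some component state `l i`
lies in its specific difference set `D_i`. -/
theorem composed_disagree {n : ℕ} {L : Fin n → Type} {C A : Type}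
    (alpha : Fin n → Set A) (P₁ P₂ : ∀ i, PTA (L i) C A)
    (l : ∀ i, L i)
    (h : DisagreeAt (compose alpha P₁) (compose alpha P₂) l) :
    ∃ i, l i ∈ { s | DisagreeAt (P₁ i) (P₂ i) s } := by
  by_contra hc
  push_neg at hc
  simp only [Set.mem_setOf_eq, DisagreeAt, not_or, not_not] at hc
  rcases h with h | h
  · exact h (Set.iInter_congr fun i => (hc i).1)
  · exact h (Set.Subset.antisymm
      (composed_out_subset alpha P₁ P₂ l fun i => (hc i).2)
      (composed_out_subset alpha P₂ P₁ l fun i => ((hc i).2).symm))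
end

section
/- Combining the previous two results: if a semantic state (s₁,...,sₙ, v) common to [[PTA₁]] and [[PTA₂]] (where PTA₁ and PTA₂ are n-fold compositions differing only in components indexed by the difference set D) is a point of disagreement between the two semantic probabilistic systems, then for at least one i ∈ {1,...,n}, the component state s_i lies in the specific difference set D_i of components PTA_i¹ and PTA_i². -/
open scoped ENNReal Classical

universe u

def shiftVal {C : Type} (v : C → ℕ) (t : ℕ) : C → ℕ := fun c => v c + t

noncomputable def resetVal {C : Type} (v : C → ℕ) (X : Set C) : C → ℕ :=
  fun c => if c ∈ X then 0 else v c

/-- The set `Steps(l, v)` of the integer-time semantics of a PTA. -/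
noncomputable def SemSteps {L : Type u} {C A : Type} (P : PTA L C A)
    (l : L) (v : C → ℕ) : Set ((ℕ ⊕ A) × PMF (L × (C → ℕ))) :=
  { p |
    (∃ t : ℕ, p.1 = Sum.inl t ∧ p.2 (l, shiftVal v t) = 1 ∧
      (∀ t' ≤ t, shiftVal v t' ∈ P.inv l) ∧
      (∀ e ∈ P.edges, e.1 = l → e.2.2.1 ∈ P.urgent →
        ∀ t' ≤ t, shiftVal v t' ∉ e.2.1)) ∨
    (∃ e ∈ P.edges, e.1 = l ∧ v ∈ e.2.1 ∧ p.1 = Sum.inr e.2.2.1 ∧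
      ∀ l' v', p.2 (l', v') =
        ∑' X : { X : Set C // resetVal v X = v' }, e.2.2.2 (X.1, l')) }

/-- Equivalence of distributions: equal supports and pointwise agreement. -/
def EquivDist {S : Type*} (P₁ P₂ : PMF S) : Prop :=
  P₁.support = P₂.support ∧ ∀ s ∈ P₁.support, P₁ s = P₂ s

/-- Equivalence of sets of labeled distributions. -/
def StepsEquiv {S A : Type*} (T₁ T₂ : Set (A × PMF S)) : Prop :=
  (∀ p ∈ T₁, ∃ q ∈ T₂, EquivDist p.2 q.2) ∧ (∀ q ∈ T₂, ∃ p ∈ T₁, EquivDist q.2 p.2)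

lemma semSteps_subset_of_eq {L : Type u} {C A : Type} (P Q : PTA L C A)
    (l : L) (v : C → ℕ)
    (hinv : P.inv l = Q.inv l) (hurg : P.urgent = Q.urgent)
    (hout : outEdges P l = outEdges Q l) :
    SemSteps P l v ⊆ SemSteps Q l v := by
  rintro p (⟨t, h1, h2, h3, h4⟩ | ⟨e, he, h1, h2, h3, h4⟩)
  · left
    refine ⟨t, h1, h2, by rw [← hinv]; exact h3, ?_⟩
    intro e he hel hu t' ht'
    have hmem : e ∈ outEdges P l := by
      rw [hout]; exact ⟨he, hel⟩
    exact h4 e hmem.1 hel (by rw [hurg]; exact hu) t' ht'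
  · right
    have hmem : e ∈ outEdges Q l := by
      rw [← hout]; exact ⟨he, h1⟩
    exact ⟨e, hmem.1, hmem.2, h2, h3, h4⟩

lemma composed_outEdges_subset {n : ℕ} {L : Fin n → Type} {C A : Type}
    (alpha : Fin n → Set A) (P₁ P₂ : ∀ i, PTA (L i) C A) (s : ∀ i, L i)
    (hout : ∀ i, outEdges (P₁ i) (s i) = outEdges (P₂ i) (s i)) :
    outEdges (compose alpha P₁) s ⊆ outEdges (compose alpha P₂) s := by
  rintro e ⟨⟨a, g, p, h1, h2, h3, h4⟩, hl⟩
  refine ⟨⟨a, g, p, h1, ?_, h3, h4⟩, hl⟩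
  intro i hai
  have : (e.1 i, g i, a, p i) ∈ outEdges (P₁ i) (s i) := by
    exact ⟨h2 i hai, by rw [hl]⟩
  rw [hout i] at this
  exact this.1

lemma stepsEquiv_refl {S A : Type*} (T : Set (A × PMF S)) : StepsEquiv T T :=
  ⟨fun p hp => ⟨p, hp, rfl, fun _ _ => rfl⟩, fun p hp => ⟨p, hp, rfl, fun _ _ => rfl⟩⟩

/-- PTA level requirements: for `n`-fold compositions
`PTA₁ = PTA₁¹ ∥ … ∥ PTAₙ¹` and `PTA₂ = PTA₁² ∥ … ∥ PTAₙ²` over identical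
clocks, labels and urgent labels, if a common semantic state
`(s₁, …, sₙ, v)` of `[[PTA₁]]` and `[[PTA₂]]` is a point of disagreement
between the two semantic probabilistic systems (its sets of labeled outgoing
distributions are not `≡_dist`-equivalent), then for at least one `i` the
component state `s i` lies in the specific difference set `D_i` of the
components `PTA_i¹` and `PTA_i²`. -/
theorem composed_sem_disagree {n : ℕ} {L : Fin n → Type} {C A : Type}
    (alpha : Fin n → Set A) (P₁ P₂ : ∀ i, PTA (L i) C A)
    (hu : ∀ i, (P₁ i).urgent = (P₂ i).urgent)
    (s : ∀ i, L i) (v : C → ℕ)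
    (h : ¬ StepsEquiv (SemSteps (compose alpha P₁) s v)
        (SemSteps (compose alpha P₂) s v)) :
    ∃ i, s i ∈ { x | DisagreeAt (P₁ i) (P₂ i) x } := by
  by_contra hc
  push_neg at hc
  have hnd : ∀ i, (P₁ i).inv (s i) = (P₂ i).inv (s i) ∧
      outEdges (P₁ i) (s i) = outEdges (P₂ i) (s i) := by
    intro i
    have := hc i
    simp only [Set.mem_setOf_eq, DisagreeAt, not_or, not_not] at this
    exact this
  have hinv : (compose alpha P₁).inv s = (compose alpha P₂).inv s := by
    simp only [compose]
    exact Set.iInter_congr fun i => (hnd i).1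
  have hurg : (compose alpha P₁).urgent = (compose alpha P₂).urgent := by
    simp only [compose]
    exact Set.iUnion_congr fun i => hu i
  have houtc : outEdges (compose alpha P₁) s = outEdges (compose alpha P₂) s :=
    Set.Subset.antisymm
      (composed_outEdges_subset alpha P₁ P₂ s fun i => (hnd i).2)
      (composed_outEdges_subset alpha P₂ P₁ s fun i => ((hnd i).2).symm)
  have heq : SemSteps (compose alpha P₁) s v = SemSteps (compose alpha P₂) s v :=
    Set.Subset.antisymm
      (semSteps_subset_of_eq _ _ s v hinv hurg houtc)
      (semSteps_subset_of_eq _ _ s v hinv.symm hurg.symm houtc.symm)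
  exact h (heq ▸ stepsEquiv_refl _)
end
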